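/- arXiv:2602.01309 — 4 statements merged into one kernel-verified Lean document; each statement's English description precedes it below -/
import Mathlib

section
/- Let R be a commutative unital Krasner hyperring. The hyperspace 𝓘⁺_R of proper hyperideals of R, with the lower topology generated by the closed subbasis {V_J = {I ∈ 𝓘⁺_R : J ⊆ I} : J a hyperideal of R}, is quasi-compact. -/
universe u v

/-- A canonical hypergroup: a commutative, associative hyperoperation with
neutral element, unique inverses, and reversibility. -/
structure CanonicalHypergroup (R : Type u) where
  add : R → R → Set R
  zero : R
  neg : R → R
  add_nonempty : ∀ a b : R, (add a b).Nonempty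
  add_comm : ∀ a b : R, add a b = add b a
  add_assoc : ∀ a b c : R, (⋃ x ∈ add a b, add x c) = ⋃ x ∈ add b c, add a x
  add_zero : ∀ a : R, add a zero = {a}
  zero_mem_add_neg : ∀ a : R, zero ∈ add a (neg a)
  neg_unique : ∀ a b : R, zero ∈ add a b → b = neg a
  reversible : ∀ a b c : R, a ∈ add b c → c ∈ add (neg b) a

/-- A commutative Krasner hyperring. -/
structure KrasnerHyperring (R : Type u) extends CanonicalHypergroup R where
  mul : R → R → R
  mul_comm : ∀ a b : R, mul a b = mul b a
  mul_assoc : ∀ a b c : R, mul (mul a b) c = mul a (mul b c)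
  mul_zero : ∀ a : R, mul a zero = zero
  distrib : ∀ a b c : R, (fun x => mul a x) '' add b c = add (mul a b) (mul a c)

/-- A commutative unital Krasner hyperring. -/
structure UnitalKrasnerHyperring (R : Type u) extends KrasnerHyperring R where
  one : R
  mul_one : ∀ a : R, mul a one = a

/-- A hyperideal of a Krasner hyperring: a nonempty subset closed under
hyperaddition, negation, and multiplication by arbitrary elements. -/
def IsHyperideal {R : Type u} (H : KrasnerHyperring R) (I : Set R) : Prop :=
  I.Nonempty ∧ (∀ a ∈ I, ∀ b ∈ I, H.add a b ⊆ I) ∧ (∀ a ∈ I, H.neg a ∈ I) ∧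
    ∀ r a : R, a ∈ I → H.mul r a ∈ I

/-- Iterated hypersum of a list of elements (empty sum is `{0}`). -/
def listHyperSum {R : Type u} (H : CanonicalHypergroup R) : List R → Set R
  | [] => {H.zero}
  | a :: l => ⋃ x ∈ listHyperSum H l, H.add a x

/-- The sum of a family of hyperideals: all `x` lying in a finite hypersum of
elements picked from finitely many members of the family. -/
def hyperidealFamilySum {R : Type u} {Λ : Type v} (H : KrasnerHyperring R)
    (I : Λ → Set R) : Set R :=
  {x | ∃ (s : Finset Λ) (a : Λ → R), (∀ l ∈ s, a l ∈ I l) ∧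
    x ∈ listHyperSum H.toCanonicalHypergroup (s.toList.map a)}

/-- The hyperideal generated by a set: the intersection of all hyperideals containing it. -/
def genHyperideal {R : Type u} (H : KrasnerHyperring R) (S : Set R) : Set R :=
  ⋂₀ {I : Set R | IsHyperideal H I ∧ S ⊆ I}

/-- Compact element of the lattice of hyperideals. -/
def IsCompactHyperideal {R : Type u} (H : KrasnerHyperring R) (I : Set R) : Prop :=
  IsHyperideal H I ∧ ∀ (Λ : Type u) (J : Λ → Set R), (∀ l, IsHyperideal H (J l)) →
    I ⊆ genHyperideal H (⋃ l, J l) →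
      ∃ s : Finset Λ, I ⊆ genHyperideal H (⋃ l ∈ s, J l)

/-- A spectral space: quasi-compact, sober, with a basis of quasi-compact open
sets closed under finite intersections. -/
def IsSpectralSpace (X : Type u) [TopologicalSpace X] : Prop :=
  CompactSpace X ∧ QuasiSober X ∧ T0Space X ∧
    ∃ B : Set (Set X), TopologicalSpace.IsTopologicalBasis B ∧
      (∀ U ∈ B, IsCompact U) ∧ ∀ U ∈ B, ∀ V ∈ B, U ∩ V ∈ B

/-- The hyperspace of all hyperideals of `R`. -/
def HyperidealSpace {R : Type u} (H : KrasnerHyperring R) : Type u :=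
  {I : Set R // IsHyperideal H I}

/-- The hyperspace of proper hyperideals of `R`. -/
def ProperHyperidealSpace {R : Type u} (H : KrasnerHyperring R) : Type u :=
  {I : Set R // IsHyperideal H I ∧ I ≠ Set.univ}

/-- The lower topology on the hyperspace of all hyperideals: the closed sets are
generated by the subbasis `V_J = {I : J ⊆ I}` for hyperideals `J`. -/
instance hyperidealSpaceTopology {R : Type u} (H : KrasnerHyperring R) :
    TopologicalSpace (HyperidealSpace H) :=
  TopologicalSpace.generateFrom
    {U | ∃ J : Set R, IsHyperideal H J ∧ U = {I : HyperidealSpace H | ¬ J ⊆ I.1}}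

/-- The lower topology on the hyperspace of proper hyperideals. -/
instance properHyperidealSpaceTopology {R : Type u} (H : KrasnerHyperring R) :
    TopologicalSpace (ProperHyperidealSpace H) :=
  TopologicalSpace.generateFrom
    {U | ∃ J : Set R, IsHyperideal H J ∧ U = {I : ProperHyperidealSpace H | ¬ J ⊆ I.1}}

/-- The lower topology on a complete lattice: closed sets generated by the
subbasis of principal up-sets `Ici x`. -/
def latticeLowerTopology (L : Type u) [CompleteLattice L] : TopologicalSpace L :=
  TopologicalSpace.generateFrom {U | ∃ x : L, U = (Set.Ici x)ᶜ}

/-!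
By Alexander's subbasis theorem it suffices to refine covers by subbasic open sets
`{I | ¬ J i ⊆ I}`. Such a family covers exactly when no proper hyperideal contains every `J i`,
i.e. when `1` is a finite hypersum of elements of `⋃ i, J i`. The finitely many summands lie in
finitely many of the `J i`, and these already cover.
-/

namespace CanonicalHypergroup

variable {R : Type u} (C : CanonicalHypergroup R)

theorem zero_add (a : R) : C.add C.zero a = {a} := by
  rw [C.add_comm, C.add_zero]

theorem neg_mem_add_neg {a b z : R} (hz : z ∈ C.add a b) :
    C.neg z ∈ C.add (C.neg a) (C.neg b) := by
  have h1 : b ∈ C.add z (C.neg a) := C.add_comm _ _ ▸ C.reversible z a b hz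
  have h2 : C.neg a ∈ C.add b (C.neg z) := C.add_comm _ _ ▸ C.reversible b z (C.neg a) h1
  exact C.add_comm _ _ ▸ C.reversible (C.neg a) b (C.neg z) h2

theorem neg_zero : C.neg C.zero = C.zero :=
  (C.neg_unique C.zero C.zero (by rw [C.add_zero]; rfl)).symm

end CanonicalHypergroup

section ListHyperSum

variable {R : Type u}

theorem listHyperSum_singleton (C : CanonicalHypergroup R) (x : R) :
    listHyperSum C [x] = {x} := by
  simp [listHyperSum, C.add_zero]

theorem mem_listHyperSum_append (C : CanonicalHypergroup R) :
    ∀ (l₁ l₂ : List R) {x y z : R}, x ∈ listHyperSum C l₁ → y ∈ listHyperSum C l₂ →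
      z ∈ C.add x y → z ∈ listHyperSum C (l₁ ++ l₂)
  | [], _, x, y, z, hx, hy, hz => by
      rw [listHyperSum, Set.mem_singleton_iff] at hx
      subst hx
      rw [C.zero_add, Set.mem_singleton_iff] at hz
      exact hz ▸ hy
  | a :: t, l₂, x, y, z, hx, hy, hz => by
      simp only [listHyperSum, Set.mem_iUnion, List.cons_append] at hx ⊢
      obtain ⟨u, hu, hxu⟩ := hx
      have hz' : z ∈ ⋃ w ∈ C.add a u, C.add w y := Set.mem_biUnion hxu hz
      rw [C.add_assoc] at hz'
      obtain ⟨w, hw, hzw⟩ := Set.mem_iUnion₂.mp hz'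
      exact ⟨w, mem_listHyperSum_append C t l₂ hu hy hw, hzw⟩

theorem neg_mem_listHyperSum_map_neg (C : CanonicalHypergroup R) :
    ∀ (l : List R) {x : R}, x ∈ listHyperSum C l → C.neg x ∈ listHyperSum C (l.map C.neg)
  | [], x, hx => by
      rw [listHyperSum, Set.mem_singleton_iff] at hx
      rw [hx, List.map_nil, listHyperSum, C.neg_zero]
      rfl
  | a :: t, x, hx => by
      simp only [listHyperSum, Set.mem_iUnion, List.map_cons] at hx ⊢
      obtain ⟨u, hu, hxu⟩ := hx
      exact ⟨C.neg u, neg_mem_listHyperSum_map_neg C t hu, C.neg_mem_add_neg hxu⟩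

theorem mul_mem_listHyperSum_map_mul (H : KrasnerHyperring R) (r : R) :
    ∀ (l : List R) {x : R}, x ∈ listHyperSum H.toCanonicalHypergroup l →
      H.mul r x ∈ listHyperSum H.toCanonicalHypergroup (l.map (H.mul r))
  | [], x, hx => by
      rw [listHyperSum, Set.mem_singleton_iff] at hx
      rw [hx, List.map_nil, listHyperSum, H.mul_zero]
      rfl
  | a :: t, x, hx => by
      simp only [listHyperSum, Set.mem_iUnion, List.map_cons] at hx ⊢
      obtain ⟨u, hu, hxu⟩ := hx
      exact ⟨H.mul r u, mul_mem_listHyperSum_map_mul H r t hu, H.distrib r a u ▸ ⟨x, hxu, rfl⟩⟩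

end ListHyperSum

namespace IsHyperideal

variable {R : Type u} {H : KrasnerHyperring R} {I : Set R}

theorem zero_mem (hI : IsHyperideal H I) : H.zero ∈ I := by
  obtain ⟨⟨a, ha⟩, hadd, hneg, -⟩ := hI
  exact hadd a ha (H.neg a) (hneg a ha) (H.zero_mem_add_neg a)

theorem listHyperSum_subset (hI : IsHyperideal H I) :
    ∀ l : List R, (∀ a ∈ l, a ∈ I) → listHyperSum H.toCanonicalHypergroup l ⊆ I
  | [], _ => by
      rw [listHyperSum, Set.singleton_subset_iff]
      exact hI.zero_mem
  | a :: t, hl => by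
      intro x hx
      simp only [listHyperSum, Set.mem_iUnion] at hx
      obtain ⟨u, hu, hxu⟩ := hx
      exact hI.2.1 a (hl a List.mem_cons_self) u
        (listHyperSum_subset hI t (fun b hb => hl b (List.mem_cons_of_mem a hb)) hu) hxu

theorem eq_univ_of_one_mem {H : UnitalKrasnerHyperring R}
    (hI : IsHyperideal H.toKrasnerHyperring I) (h1 : H.one ∈ I) : I = Set.univ :=
  Set.eq_univ_of_forall fun r => H.mul_one r ▸ hI.2.2.2 r H.one h1

end IsHyperideal

/-- For `S = ⋃ i, J i` this is the sum `Σ J_i` of the hyperideals `J i`. -/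
def finiteHyperSums {R : Type u} (H : KrasnerHyperring R) (S : Set R) : Set R :=
  {x | ∃ l : List R, (∀ a ∈ l, a ∈ S) ∧ x ∈ listHyperSum H.toCanonicalHypergroup l}

section FiniteHyperSums

variable {R : Type u} (H : KrasnerHyperring R) {S : Set R}

theorem subset_finiteHyperSums : S ⊆ finiteHyperSums H S := fun x hx =>
  ⟨[x], by simpa using hx, by rw [listHyperSum_singleton]; rfl⟩

theorem isHyperideal_finiteHyperSums (hneg : ∀ a ∈ S, H.neg a ∈ S)
    (hmul : ∀ r, ∀ a ∈ S, H.mul r a ∈ S) : IsHyperideal H (finiteHyperSums H S) := by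
  refine ⟨⟨H.zero, [], by simp, rfl⟩, ?_, ?_, ?_⟩
  · rintro x ⟨l₁, hl₁, hx⟩ y ⟨l₂, hl₂, hy⟩ z hz
    refine ⟨l₁ ++ l₂, fun a ha => ?_, mem_listHyperSum_append _ l₁ l₂ hx hy hz⟩
    exact (List.mem_append.mp ha).elim (hl₁ a) (hl₂ a)
  · rintro x ⟨l, hl, hx⟩
    refine ⟨l.map H.neg, ?_, neg_mem_listHyperSum_map_neg _ l hx⟩
    simpa using fun a ha => hneg a (hl a ha)
  · rintro r x ⟨l, hl, hx⟩
    refine ⟨l.map (H.mul r), ?_, mul_mem_listHyperSum_map_mul H r l hx⟩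
    simpa using fun a ha => hmul r a (hl a ha)

theorem isHyperideal_finiteHyperSums_iUnion {ι : Sort*} {J : ι → Set R}
    (hJ : ∀ i, IsHyperideal H (J i)) : IsHyperideal H (finiteHyperSums H (⋃ i, J i)) := by
  refine isHyperideal_finiteHyperSums H (fun a ha => ?_) (fun r a ha => ?_) <;>
    obtain ⟨i, hai⟩ := Set.mem_iUnion.mp ha
  · exact Set.mem_iUnion.mpr ⟨i, (hJ i).2.2.1 a hai⟩
  · exact Set.mem_iUnion.mpr ⟨i, (hJ i).2.2.2 r a hai⟩

end FiniteHyperSums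

/-- The unit hyperideal is a compact element of the lattice of hyperideals. -/
theorem exists_finite_forall_subset_imp_eq_univ {R : Type u} (H : UnitalKrasnerHyperring R)
    {ι : Type*} (J : ι → Set R) (hJ : ∀ i, IsHyperideal H.toKrasnerHyperring (J i))
    (hcover : ∀ I, IsHyperideal H.toKrasnerHyperring I → (∀ i, J i ⊆ I) → I = Set.univ) :
    ∃ F : Set ι, F.Finite ∧
      ∀ I, IsHyperideal H.toKrasnerHyperring I → (∀ i ∈ F, J i ⊆ I) → I = Set.univ := by
  have hsum := isHyperideal_finiteHyperSums_iUnion H.toKrasnerHyperring hJ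
  have hone : H.one ∈ finiteHyperSums H.toKrasnerHyperring (⋃ i, J i) := by
    rw [hcover _ hsum fun i =>
      (Set.subset_iUnion J i).trans (subset_finiteHyperSums H.toKrasnerHyperring)]
    trivial
  obtain ⟨l, hl, h1⟩ := hone
  obtain ⟨F, hF, hlF⟩ := Set.finite_subset_iUnion l.finite_toSet hl
  refine ⟨F, hF, fun I hI hJI => hI.eq_univ_of_one_mem (hI.listHyperSum_subset l ?_ h1)⟩
  intro a ha
  obtain ⟨i, hi, hai⟩ := Set.mem_iUnion₂.mp (hlF ha)
  exact hJI i hi hai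

theorem iUnion_not_subset_eq_univ_iff {R : Type u} {H : KrasnerHyperring R} {ι : Type*}
    (J : ι → Set R) (F : Set ι) :
    ⋃ i ∈ F, {I : ProperHyperidealSpace H | ¬ J i ⊆ I.1} = Set.univ ↔
      ∀ I, IsHyperideal H I → (∀ i ∈ F, J i ⊆ I) → I = Set.univ := by
  rw [Set.eq_univ_iff_forall]
  simp only [Set.mem_iUnion, Set.mem_ofPred_eq, exists_prop]
  constructor
  · intro h I hI hJI
    by_contra hne
    obtain ⟨i, hi, hJ⟩ := h ⟨I, hI, hne⟩
    exact hJ (hJI i hi)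
  · intro h I
    by_contra! hJI
    exact I.2.2 (h I.1 I.2.1 hJI)

/-- the hyperspace of proper hyperideals is quasi-compact. -/
theorem properHyperidealSpace_compact {R : Type u} (H : UnitalKrasnerHyperring R) :
    CompactSpace (ProperHyperidealSpace H.toKrasnerHyperring) := by
  refine compactSpace_generateFrom' rfl fun ι U hU => ?_
  choose J hJ hUJ using fun i => (U i).2
  simp only [hUJ] at hU ⊢
  rw [← Set.biUnion_univ, iUnion_not_subset_eq_univ_iff] at hU
  obtain ⟨F, hF, hFcover⟩ :=
    exists_finite_forall_subset_imp_eq_univ H J hJ fun I hI hJI => hU I hI fun i _ => hJI i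
  exact ⟨F, hF, (iUnion_not_subset_eq_univ_iff J F).mpr hFcover⟩
end

section
/- Let R be a commutative unital Krasner hyperring. The hyperspace 𝓘⁺_R of proper hyperideals with the lower topology is sober: every nonempty irreducible closed subset is the closure of a unique point. -/
universe u v

section Aux
variable {R : Type u} {H : KrasnerHyperring R}

lemma aux_zero_mem {I : Set R} (hI : IsHyperideal H I) : H.zero ∈ I := by
  obtain ⟨⟨a, ha⟩, hadd, hneg, _⟩ := hI
  exact hadd a ha (H.neg a) (hneg a ha) (H.zero_mem_add_neg a)

/-- subbasis set -/
def auxSub (H : KrasnerHyperring R) : Set (Set (ProperHyperidealSpace H)) :=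
  {U | ∃ J : Set R, IsHyperideal H J ∧ U = {I : ProperHyperidealSpace H | ¬ J ⊆ I.1}}

lemma aux_topo_eq : (properHyperidealSpaceTopology H) =
    TopologicalSpace.generateFrom (auxSub H) := rfl

lemma aux_isClosed_V {J : Set R} (hJ : IsHyperideal H J) :
    IsClosed {I : ProperHyperidealSpace H | J ⊆ I.1} := by
  rw [← isOpen_compl_iff]
  exact TopologicalSpace.GenerateOpen.basic _ ⟨J, hJ, rfl⟩

lemma aux_mem_open_mono {I K : ProperHyperidealSpace H} (hIK : I.1 ⊆ K.1)
    {U : Set (ProperHyperidealSpace H)} (hU : IsOpen U) (hK : K ∈ U) : I ∈ U := by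
  induction hU with
  | basic U hU =>
    obtain ⟨J, _, rfl⟩ := hU
    exact fun hJ => hK (hJ.trans hIK)
  | univ => trivial
  | inter U V _ _ ihU ihV => exact ⟨ihU hK.1, ihV hK.2⟩
  | sUnion S _ ih =>
    obtain ⟨u, hu, hKu⟩ := hK
    exact ⟨u, hu, ih u hu hKu⟩

lemma aux_mem_closure {I K : ProperHyperidealSpace H} (hIK : I.1 ⊆ K.1) :
    K ∈ closure ({I} : Set (ProperHyperidealSpace H)) := by
  rw [mem_closure_iff]
  exact fun o ho hKo => ⟨I, aux_mem_open_mono hIK ho hKo, rfl⟩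

lemma aux_closure_singleton (I : ProperHyperidealSpace H) :
    closure ({I} : Set (ProperHyperidealSpace H)) = {K | I.1 ⊆ K.1} := by
  refine subset_antisymm ?_ (fun K hK => aux_mem_closure hK)
  exact closure_minimal (by simp) (aux_isClosed_V I.2.1)

end Aux

/-- the hyperspace of proper hyperideals is sober (every nonempty
irreducible closed set is the closure of a unique point). -/
theorem properHyperidealSpace_sober {R : Type u} (H : UnitalKrasnerHyperring R) :
    QuasiSober (ProperHyperidealSpace H.toKrasnerHyperring) ∧
      T0Space (ProperHyperidealSpace H.toKrasnerHyperring) := by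
  set K := H.toKrasnerHyperring
  constructor
  · constructor
    intro S hS hSc
    classical
    -- candidate generic point: the intersection
    set I0 : Set R := {x | ∀ J ∈ S, x ∈ J.1} with hI0def
    have hI0 : IsHyperideal K I0 := by
      refine ⟨⟨K.zero, fun J _ => aux_zero_mem J.2.1⟩, ?_, ?_, ?_⟩
      · intro a ha b hb x hx J hJ
        exact (J.2.1.2.1 a (ha J hJ) b (hb J hJ)) hx
      · intro a ha J hJ
        exact J.2.1.2.2.1 a (ha J hJ)
      · intro r a ha J hJ
        exact J.2.1.2.2.2 r a (ha J hJ)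
    obtain ⟨J0, hJ0⟩ := hS.nonempty
    have hI0sub : ∀ J ∈ S, I0 ⊆ J.1 := fun J hJ x hx => hx J hJ
    have hproper : I0 ≠ Set.univ := by
      intro h
      apply J0.2.2
      have h2 := hI0sub J0 hJ0
      rw [h] at h2
      exact Set.eq_univ_of_univ_subset h2
    set p : ProperHyperidealSpace K := ⟨I0, hI0, hproper⟩ with hp
    have hpS : p ∈ S := by
      by_contra hpn
      obtain ⟨v, hv, hpv, hvS⟩ :=
        (TopologicalSpace.isTopologicalBasis_of_subbasis
          (aux_topo_eq (H := K))).exists_subset_of_mem_open hpn hSc.isOpen_compl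
      obtain ⟨f, ⟨hffin, hfsub⟩, rfl⟩ := hv
      -- S covered by the complements of members of f
      set Z : Finset (Set (ProperHyperidealSpace K)) := hffin.toFinset.image compl with hZ
      have hcov : S ⊆ ⋃₀ ↑Z := by
        intro x hx
        have hxS : x ∉ ⋂₀ f := fun hxf => hvS hxf hx
        rw [Set.mem_sInter] at hxS
        push_neg at hxS
        obtain ⟨u, hu, hxu⟩ := hxS
        refine ⟨uᶜ, ?_, hxu⟩
        rw [hZ, Finset.coe_image, Set.Finite.coe_toFinset]
        exact ⟨u, hu, rfl⟩
      have hclosed : ∀ z ∈ Z, IsClosed z := by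
        intro z hz
        simp only [hZ, Finset.mem_image, hffin.mem_toFinset] at hz
        obtain ⟨u, hu, rfl⟩ := hz
        obtain ⟨J, hJ, rfl⟩ := hfsub hu
        have : {I : ProperHyperidealSpace K | ¬ J ⊆ I.1}ᶜ
            = {I : ProperHyperidealSpace K | J ⊆ I.1} := by
          ext I; simp
        rw [this]
        exact aux_isClosed_V hJ
      obtain ⟨z, hzZ, hSz⟩ := (isIrreducible_iff_sUnion_isClosed.mp hS) Z hclosed hcov
      simp only [hZ, Finset.mem_image, hffin.mem_toFinset] at hzZ
      obtain ⟨u, hu, rfl⟩ := hzZ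
      obtain ⟨J, hJideal, rfl⟩ := hfsub hu
      -- so J ⊆ every member of S, hence J ⊆ I0, contradicting p ∈ u
      have hpu : p ∈ {I : ProperHyperidealSpace K | ¬ J ⊆ I.1} := hpv _ hu
      apply hpu
      intro x hx J' hJ' 
      have := hSz hJ'
      simp at this
      exact this hx
    refine ⟨p, ?_⟩
    rw [IsGenericPoint, aux_closure_singleton]
    refine subset_antisymm ?_ (fun J hJ => hI0sub J hJ)
    intro J hJ
    -- J ⊇ I0 means J ∈ closure {p} ⊆ S
    have : J ∈ closure ({p} : Set (ProperHyperidealSpace K)) := aux_mem_closure hJ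
    exact (hSc.closure_subset_iff.mpr (Set.singleton_subset_iff.mpr hpS)) this
  · constructor
    intro x y hxy
    rw [inseparable_iff_closure_eq, aux_closure_singleton, aux_closure_singleton] at hxy
    have h1 : x.1 ⊆ y.1 := by
      have : y ∈ {L : ProperHyperidealSpace K | x.1 ⊆ L.1} := hxy ▸ (by simp : y ∈ {L : ProperHyperidealSpace K | y.1 ⊆ L.1})
      exact this
    have h2 : y.1 ⊆ x.1 := by
      have : x ∈ {L : ProperHyperidealSpace K | y.1 ⊆ L.1} := hxy ▸ (by simp : x ∈ {L : ProperHyperidealSpace K | x.1 ⊆ L.1})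
      exact this
    exact Subtype.ext (subset_antisymm h1 h2)
end

section
/- Let L be an algebraic lattice equipped with the lower topology, whose closed sets are generated by the subbasis {↑x = {y ∈ L : x ≤ y} : x ∈ L}. Then L is a spectral space. -/
universe u v

/-! Every compact element `k` yields a compact open set `(↑k)ᶜ`: a cover by subbasic opens
`(↑y)ᶜ`, `y ∈ Y`, misses `sSup Y`, so `k ≤ sSup Y`, and compactness of `k` selects finitely many
`y`. The same holds for finite intersections of such sets, and when `L` is algebraic they form a
basis, since `¬ a ≤ x` is witnessed by a compact `c ≤ a` with `¬ c ≤ x`. An irreducible closed set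
`C` is an upper set with `sInf C ∈ C`, hence it is the closure of `{sInf C}`. -/

open Set TopologicalSpace Topology CompleteLattice

theorem isLower_latticeLowerTopology {L : Type u} [CompleteLattice L] :
    @IsLower L (latticeLowerTopology L) _ :=
  @IsLower.mk L (latticeLowerTopology L) _ <| by simp only [latticeLowerTopology, lower, eq_comm]

theorem IsIrreducible.exists_subset_Ici_of_subset_upperClosure {L : Type u} [Preorder L]
    [TopologicalSpace L] [ClosedIciTopology L] {C t : Set L} (hC : IsIrreducible C)
    (ht : t.Finite) (hCt : C ⊆ upperClosure t) : ∃ a ∈ t, C ⊆ Ici a := by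
  obtain ⟨_, hz, hCz⟩ := isIrreducible_iff_sUnion_isClosed.mp hC (ht.toFinset.image Ici)
    (by simp [isClosed_Ici]) (by simpa [coe_upperClosure] using hCt)
  obtain ⟨a, ha, rfl⟩ := Finset.mem_image.mp hz
  exact ⟨a, ht.mem_toFinset.mp ha, hCz⟩

section CompleteLattice

variable {L : Type u} [CompleteLattice L]

def compactLowerBasis (L : Type u) [CompleteLattice L] : Set (Set L) :=
  {U | ∃ K : Set L, K.Finite ∧ (∀ k ∈ K, IsCompactElement k) ∧ (upperClosure K : Set L)ᶜ = U}

theorem inter_mem_compactLowerBasis {U V : Set L} (hU : U ∈ compactLowerBasis L)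
    (hV : V ∈ compactLowerBasis L) : U ∩ V ∈ compactLowerBasis L := by
  obtain ⟨K, hKfin, hK, rfl⟩ := hU
  obtain ⟨K', hK'fin, hK', rfl⟩ := hV
  refine ⟨K ∪ K', hKfin.union hK'fin, fun k hk => hk.elim (hK k) (hK' k), ?_⟩
  simp [upperClosure_union, compl_union]

namespace Topology.IsLower

variable [TopologicalSpace L] [IsLower L]

theorem isCompact_compl_upperClosure {K : Set L} (hK : ∀ k ∈ K, IsCompactElement k) :
    IsCompact (upperClosure K : Set L)ᶜ := by
  refine isCompact_generateFrom (topology_eq L) fun P hP hcover => ?_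
  set Y := {y : L | (Ici y)ᶜ ∈ P}
  obtain ⟨k, hkK, hkY⟩ : sSup Y ∈ upperClosure K := by
    by_contra hY
    obtain ⟨_, hU, hYU⟩ := hcover hY
    obtain ⟨y, rfl⟩ := hP hU
    exact hYU (le_sSup hU)
  obtain ⟨F, hFY, hkF⟩ := (isCompactElement_iff_exists_le_sSup_of_le_sSup _ k).mp (hK k hkK) Y hkY
  refine ⟨(fun y => (Ici y)ᶜ) '' F, image_subset_iff.mpr hFY, F.finite_toSet.image _, ?_⟩
  intro z hz
  obtain ⟨y, hyF, hyz⟩ : ∃ y ∈ F, ¬ y ≤ z := by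
    by_contra! hFz
    exact hz ⟨k, hkK, hkF.trans (Finset.sup_le hFz)⟩
  exact ⟨(Ici y)ᶜ, mem_image_of_mem _ hyF, hyz⟩

theorem compactSpace : CompactSpace L :=
  ⟨by simpa using isCompact_compl_upperClosure (L := L) (K := ∅) (by simp)⟩

theorem isCompact_of_mem_compactLowerBasis {U : Set L} (hU : U ∈ compactLowerBasis L) :
    IsCompact U := by
  obtain ⟨K, -, hK, rfl⟩ := hU
  exact isCompact_compl_upperClosure hK

theorem isTopologicalBasis_compactLowerBasis [IsCompactlyGenerated L] :
    IsTopologicalBasis (compactLowerBasis L) := by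
  refine isTopologicalBasis_of_isOpen_of_nhds ?_ fun x U hxU hU => ?_
  · rintro _ ⟨K, hK, -, rfl⟩
    exact (isClosed_upperClosure hK).isOpen_compl
  obtain ⟨_, ⟨t, ht, rfl⟩, hxt, htU⟩ := IsLower.isTopologicalBasis.exists_subset_of_mem_open hxU hU
  have : ∀ a ∈ t, ∃ c, IsCompactElement c ∧ c ≤ a ∧ ¬ c ≤ x := fun a ha => by
    simpa [le_iff_compact_le_imp (a := a)] using fun hax => hxt ⟨a, ha, hax⟩
  choose! c hc using this
  refine ⟨_, ⟨c '' t, ht.image c, ?_, rfl⟩, ?_, ?_⟩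
  · rintro _ ⟨a, ha, rfl⟩
    exact (hc a ha).1
  · rw [mem_compl_iff, SetLike.mem_coe, mem_upperClosure]
    rintro ⟨_, ⟨a, ha, rfl⟩, hax⟩
    exact (hc a ha).2.2 hax
  · refine (compl_subset_compl.mpr fun z hz => ?_).trans htU
    obtain ⟨a, ha, haz⟩ := mem_upperClosure.mp hz
    exact mem_upperClosure.mpr ⟨c a, mem_image_of_mem c ha, (hc a ha).2.1.trans haz⟩

theorem quasiSober : QuasiSober L := by
  refine ⟨fun {C} hC hCcl => ⟨sInf C, ?_⟩⟩
  have hmem : sInf C ∈ C := by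
    refine hCcl.closure_subset (IsLower.isTopologicalBasis.mem_closure_iff.mpr ?_)
    rintro _ ⟨t, ht, rfl⟩ hCt
    by_contra hdisj
    obtain ⟨a, ha, hCa⟩ := hC.exists_subset_Ici_of_subset_upperClosure ht fun z hz => by
      by_contra hzt
      exact hdisj ⟨z, hzt, hz⟩
    exact hCt ⟨a, ha, le_sInf hCa⟩
  rw [IsGenericPoint, closure_singleton]
  exact subset_antisymm ((isUpperSet_of_isClosed hCcl).Ici_subset hmem) fun x hx => sInf_le hx

end Topology.IsLower

end CompleteLattice

/-- an algebraic lattice with the lower topology is a spectral space. -/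
theorem algebraic_lattice_spectral {L : Type u} [CompleteLattice L]
    (halg : ∀ x : L, x = sSup {c : L | IsCompactElement c ∧ c ≤ x}) :
    @IsSpectralSpace L (latticeLowerTopology L) := by
  let _ := latticeLowerTopology L
  have := isLower_latticeLowerTopology (L := L)
  have : IsCompactlyGenerated L := ⟨fun x => ⟨_, fun _ hc => hc.1, (halg x).symm⟩⟩
  exact ⟨IsLower.compactSpace, IsLower.quasiSober, inferInstance, compactLowerBasis L,
    IsLower.isTopologicalBasis_compactLowerBasis,
    fun _ => IsLower.isCompact_of_mem_compactLowerBasis,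
    fun _ hU _ hV => inter_mem_compactLowerBasis hU hV⟩
end

section
/- Let R be a commutative unital Krasner hyperring. The hyperspace 𝓘⁺_R of proper hyperideals of R, endowed with the lower topology generated by the closed subbasis {V_J = {I ∈ 𝓘⁺_R : J ⊆ I} : J a hyperideal}, is a spectral space. -/
universe u v

/-
In the lower topology the specialization order is inclusion of hyperideals. For an ultrafilter
`φ` of proper hyperideals, `{r | ∀ᶠ I in φ, r ∈ I}` is a hyperideal (each hyperideal axiom
involves only finitely many elements), it is proper because `1` lies in no proper hyperideal,
and `φ` converges to it; hence every intersection of subbasic opens `{I | r ∉ I}` is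
quasi-compact. The intersection of the members of an irreducible closed set is its generic point.
-/

open TopologicalSpace Set Filter Topology

section Hyperideal

variable {R : Type u} {K : KrasnerHyperring R}

theorem IsHyperideal.zero_mem_s17 {I : Set R} (hI : IsHyperideal K I) : K.zero ∈ I := by
  obtain ⟨⟨a, ha⟩, -, -, hmul⟩ := hI
  have := hmul K.zero a ha
  rwa [K.mul_comm, K.mul_zero] at this

theorem isHyperideal_setOf_eventually_mem {ι : Type*} {φ : Filter ι} {I : ι → Set R}
    (hI : ∀ᶠ i in φ, IsHyperideal K (I i)) : IsHyperideal K {r | ∀ᶠ i in φ, r ∈ I i} := by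
  refine ⟨⟨K.zero, hI.mono fun i hi => hi.zero_mem_s17⟩, ?_, ?_, ?_⟩
  · intro a ha b hb x hx
    filter_upwards [hI, ha, hb] with i hi hai hbi using hi.2.1 a hai b hbi hx
  · intro a ha
    filter_upwards [hI, ha] with i hi hai using hi.2.2.1 a hai
  · intro r a ha
    filter_upwards [hI, ha] with i hi hai using hi.2.2.2 r a hai

theorem isHyperideal_genHyperideal (S : Set R) : IsHyperideal K (genHyperideal K S) := by
  have : genHyperideal K S = {r | ∀ᶠ J in 𝓟 {J | IsHyperideal K J ∧ S ⊆ J}, r ∈ id J} := by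
    ext
    simp [genHyperideal, eventually_principal]
  exact this ▸ isHyperideal_setOf_eventually_mem (eventually_principal.2 fun J hJ => hJ.1)

theorem genHyperideal_subset_iff {S I : Set R} (hI : IsHyperideal K I) :
    genHyperideal K S ⊆ I ↔ S ⊆ I :=
  ⟨fun h _ hx => h (mem_sInter.2 fun _ hJ => hJ.2 hx), fun h => sInter_subset_of_mem ⟨hI, h⟩⟩

theorem IsHyperideal.eq_univ_of_one_mem_s17 {H : UnitalKrasnerHyperring R} {I : Set R}
    (hI : IsHyperideal H.toKrasnerHyperring I) (h1 : H.one ∈ I) : I = univ :=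
  eq_univ_of_forall fun r => H.mul_one r ▸ hI.2.2.2 r H.one h1

end Hyperideal

namespace ProperHyperidealSpace

variable {R : Type u}

section Topology

variable (K : KrasnerHyperring R)

def basicOpen (r : R) : Set (ProperHyperidealSpace K) := {I | r ∉ I.1}

variable {K}

theorem isOpen_basicOpen (r : R) : IsOpen (basicOpen K r) := by
  have : basicOpen K r = {I | ¬ genHyperideal K {r} ⊆ I.1} := by
    ext I
    simp [basicOpen, genHyperideal_subset_iff I.2.1]
  exact this ▸ isOpen_generateFrom_of_mem ⟨_, isHyperideal_genHyperideal {r}, rfl⟩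

theorem topology_eq_generateFrom_basicOpen :
    properHyperidealSpaceTopology K = generateFrom (range (basicOpen K)) := by
  refine le_antisymm (le_generateFrom ?_) (le_generateFrom ?_)
  · rintro _ ⟨r, rfl⟩
    exact isOpen_basicOpen r
  · rintro _ ⟨J, -, rfl⟩
    have : {I : ProperHyperidealSpace K | ¬ J ⊆ I.1} = ⋃ r ∈ J, basicOpen K r := by
      ext I
      simp [basicOpen, not_subset]
    rw [this]
    let _ := generateFrom (range (basicOpen K))
    exact isOpen_biUnion fun r _ => isOpen_generateFrom_of_mem ⟨r, rfl⟩

theorem isTopologicalBasis_sInter_basicOpen :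
    IsTopologicalBasis ((fun f => ⋂₀ f) ''
      {f : Set (Set (ProperHyperidealSpace K)) | f.Finite ∧ f ⊆ range (basicOpen K)}) :=
  isTopologicalBasis_of_subbasis topology_eq_generateFrom_basicOpen

theorem specializes_iff_subset {I J : ProperHyperidealSpace K} : I ⤳ J ↔ I.1 ⊆ J.1 := by
  refine ⟨fun h r hr => ?_, fun h => ?_⟩
  · by_contra hrJ
    exact h.mem_open (isOpen_basicOpen r) hrJ hr
  · refine specializes_iff_forall_open.2 fun s hs hJs => ?_
    obtain ⟨_, ⟨f, ⟨-, hfB⟩, rfl⟩, hJf, hfs⟩ :=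
      isTopologicalBasis_sInter_basicOpen.isOpen_iff.1 hs J hJs
    refine hfs (mem_sInter.2 fun u hu => ?_)
    obtain ⟨r, rfl⟩ := hfB hu
    exact fun hrI => mem_sInter.1 hJf _ hu (h hrI)

instance : T0Space (ProperHyperidealSpace K) :=
  (t0Space_iff_inseparable _).2 fun _ _ h => Subtype.ext <|
    (specializes_iff_subset.1 h.specializes).antisymm (specializes_iff_subset.1 h.specializes')

theorem exists_least_of_isIrreducible {S : Set (ProperHyperidealSpace K)}
    (hS : IsIrreducible S) (hSc : IsClosed S) : ∃ p ∈ S, ∀ I ∈ S, p.1 ⊆ I.1 := by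
  obtain ⟨I₀, hI₀⟩ := hS.nonempty
  have hm : IsHyperideal K {r | ∀ I ∈ S, r ∈ I.1} := by
    simpa only [eventually_principal] using
      isHyperideal_setOf_eventually_mem (φ := 𝓟 S) (I := Subtype.val)
        (eventually_principal.2 fun I _ => I.2.1)
  let p : ProperHyperidealSpace K :=
    ⟨_, hm, ne_top_of_le_ne_top I₀.2.2 fun r hr => hr I₀ hI₀⟩
  refine ⟨p, ?_, fun I hI r hr => hr I hI⟩
  rw [← hSc.closure_eq, isTopologicalBasis_sInter_basicOpen.mem_closure_iff]
  rintro _ ⟨f, ⟨hf, hfB⟩, rfl⟩ hpf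
  have hmeets : ∀ u ∈ hf.toFinset, (S ∩ u).Nonempty := by
    intro u hu
    rw [hf.mem_toFinset] at hu
    obtain ⟨r, rfl⟩ := hfB hu
    obtain ⟨I, hI, hrI⟩ := not_forall₂.1 (mem_sInter.1 hpf _ hu)
    exact ⟨I, hI, hrI⟩
  rw [inter_comm, ← hf.coe_toFinset]
  refine isIrreducible_iff_sInter.1 hS hf.toFinset (fun u hu => ?_) hmeets
  obtain ⟨r, rfl⟩ := hfB (hf.mem_toFinset.1 hu)
  exact isOpen_basicOpen r

instance : QuasiSober (ProperHyperidealSpace K) where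
  sober hS hSc := by
    obtain ⟨p, hpS, hp⟩ := exists_least_of_isIrreducible hS hSc
    exact ⟨p, isGenericPoint_iff_specializes.2 fun I =>
      ⟨fun h => h.mem_closed hSc hpS, fun hI => specializes_iff_subset.2 (hp I hI)⟩⟩

end Topology

section Unital

variable (H : UnitalKrasnerHyperring R)

theorem setOf_eventually_mem_ne_univ (φ : Filter (ProperHyperidealSpace H.toKrasnerHyperring))
    [φ.NeBot] : {r | ∀ᶠ I in φ, r ∈ I.1} ≠ univ := by
  intro h
  have h1 : ∀ᶠ I in φ, H.one ∈ I.1 := by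
    change H.one ∈ {r | ∀ᶠ I in φ, r ∈ I.1}
    rw [h]
    trivial
  obtain ⟨I, hI⟩ := h1.exists
  exact I.2.2 (I.2.1.eq_univ_of_one_mem_s17 hI)

def ultrafilterLimit (φ : Ultrafilter (ProperHyperidealSpace H.toKrasnerHyperring)) :
    ProperHyperidealSpace H.toKrasnerHyperring :=
  ⟨{r | ∀ᶠ I in (φ : Filter (ProperHyperidealSpace H.toKrasnerHyperring)), r ∈ I.1},
    isHyperideal_setOf_eventually_mem (.of_forall fun I => I.2.1),
    setOf_eventually_mem_ne_univ H φ⟩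

variable {H}

theorem ultrafilterLimit_mem_basicOpen_iff
    {φ : Ultrafilter (ProperHyperidealSpace H.toKrasnerHyperring)} {r : R} :
    ultrafilterLimit H φ ∈ basicOpen _ r ↔ basicOpen _ r ∈ φ := by
  show (¬ ∀ᶠ I in (φ : Filter (ProperHyperidealSpace H.toKrasnerHyperring)), r ∈ I.1) ↔ _
  exact Ultrafilter.eventually_not.symm

theorem ultrafilter_le_nhds_ultrafilterLimit
    (φ : Ultrafilter (ProperHyperidealSpace H.toKrasnerHyperring)) :
    ↑φ ≤ 𝓝 (ultrafilterLimit H φ) := by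
  refine isTopologicalBasis_sInter_basicOpen.nhds_hasBasis.ge_iff.2 ?_
  rintro _ ⟨⟨f, ⟨hf, hfB⟩, rfl⟩, hφf⟩
  refine (sInter_mem hf).2 fun u hu => ?_
  obtain ⟨r, rfl⟩ := hfB hu
  exact ultrafilterLimit_mem_basicOpen_iff.1 (mem_sInter.1 hφf _ hu)

theorem isCompact_sInter_of_subset_range_basicOpen
    {f : Set (Set (ProperHyperidealSpace H.toKrasnerHyperring))}
    (hf : f ⊆ range (basicOpen _)) : IsCompact (⋂₀ f) := by
  refine isCompact_iff_ultrafilter_le_nhds.2 fun φ hφ =>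
    ⟨ultrafilterLimit H φ, mem_sInter.2 fun u hu => ?_, ultrafilter_le_nhds_ultrafilterLimit φ⟩
  obtain ⟨r, rfl⟩ := hf hu
  exact ultrafilterLimit_mem_basicOpen_iff.2
    (mem_of_superset (le_principal_iff.1 hφ) (sInter_subset_of_mem hu))

theorem compactSpace : CompactSpace (ProperHyperidealSpace H.toKrasnerHyperring) :=
  ⟨by simpa using isCompact_sInter_of_subset_range_basicOpen (H := H) (empty_subset _)⟩

end Unital

end ProperHyperidealSpace

open ProperHyperidealSpace in
/-- main theorem: the hyperspace of proper hyperideals of a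
commutative unital Krasner hyperring, with the lower topology, is spectral. -/
theorem properHyperidealSpace_spectral {R : Type u} (H : UnitalKrasnerHyperring R) :
    IsSpectralSpace (ProperHyperidealSpace H.toKrasnerHyperring) := by
  refine ⟨compactSpace, inferInstance, inferInstance, _, isTopologicalBasis_sInter_basicOpen,
    ?_, ?_⟩
  · rintro _ ⟨f, ⟨-, hf⟩, rfl⟩
    exact isCompact_sInter_of_subset_range_basicOpen hf
  · rintro _ ⟨f, ⟨hf, hfB⟩, rfl⟩ _ ⟨g, ⟨hg, hgB⟩, rfl⟩
    exact ⟨f ∪ g, ⟨hf.union hg, union_subset hfB hgB⟩, sInter_union f g⟩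
end
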